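/- arXiv:2402.03201 — 2 statements merged into one kernel-verified Lean document; each statement's English description precedes it below -/
import Mathlib

section
/- Let f : ℝ^n → ℝ be a β-strongly convex function (β > 0) and let x be a random vector in ℝ^n distributed as a multivariate Gaussian N(μ, Σ) with positive-definite covariance Σ, and assume f is integrable with respect to this Gaussian measure. Write Σ = Pᵀ Λ P via the spectral theorem, where P is orthogonal and Λ is diagonal with positive diagonal entries λ₁, …, λ_n. Then the Jensen gap satisfies E[f(x)] − f(E[x]) ≥ (β/2) · Σ_{i=1}^n λᵢ, i.e. E[f(x)] − f(μ) ≥ (β/2) · tr(Σ). -/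
/-!
If `f` is `β`-strongly convex, then `x ↦ f x - β / 2 * ‖x - c‖ ^ 2` is convex for every `c`.
Jensen's inequality for this function at the mean `c = E[x]` gives
`E[f(x)] - f(E[x]) ≥ β / 2 * E‖x - E[x]‖²`, and for `x ~ N(m, S)` the right-hand side is
`β / 2 * ∑ᵢ Var[xᵢ] = β / 2 * tr S`.
-/

open MeasureTheory ProbabilityTheory

/-- The multivariate Gaussian measure `N(m, S)` on `EuclideanSpace ℝ (Fin n)`, defined as the
pushforward of the standard Gaussian product measure under `x ↦ m + √S * x`. -/
noncomputable def multivariateGaussian {n : ℕ} (m : EuclideanSpace ℝ (Fin n))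
    (S : Matrix (Fin n) (Fin n) ℝ) (hS : S.PosSemidef) :
    Measure (EuclideanSpace ℝ (Fin n)) :=
  (Measure.pi fun _ : Fin n => gaussianReal 0 1).map
    (fun x => m + (EuclideanSpace.equiv (Fin n) ℝ).symm (((hS.1.eigenvectorUnitary : Matrix (Fin n) (Fin n) ℝ) *
      Matrix.diagonal (Real.sqrt ∘ hS.1.eigenvalues) *
      (star hS.1.eigenvectorUnitary : Matrix (Fin n) (Fin n) ℝ)).mulVec x))

open scoped MatrixOrder

lemma Matrix.PosSemidef.cfcSqrt_eq_spectral {ι : Type*} [Fintype ι] [DecidableEq ι]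
    {S : Matrix ι ι ℝ} (hS : S.PosSemidef) :
    CFC.sqrt S = (hS.1.eigenvectorUnitary : Matrix ι ι ℝ) *
      Matrix.diagonal (Real.sqrt ∘ hS.1.eigenvalues) *
      (star hS.1.eigenvectorUnitary : Matrix ι ι ℝ) := by
  rw [CFC.sqrt_eq_real_sqrt S hS.nonneg, cfcₙ_eq_cfc (hf0 := Real.sqrt_zero), hS.1.cfc_eq,
    Matrix.IsHermitian.cfc, Unitary.conjStarAlgAut_apply]
  rfl

lemma multivariateGaussian_eq_probabilityTheory_multivariateGaussian {n : ℕ}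
    (m : EuclideanSpace ℝ (Fin n)) {S : Matrix (Fin n) (Fin n) ℝ} (hS : S.PosSemidef) :
    multivariateGaussian m S hS = ProbabilityTheory.multivariateGaussian m S := by
  rw [ProbabilityTheory.multivariateGaussian, ← map_pi_eq_stdGaussian,
    Measure.map_map (by fun_prop) (by fun_prop), _root_.multivariateGaussian,
    hS.cfcSqrt_eq_spectral]
  rfl

lemma integral_norm_sub_sq_multivariateGaussian {ι : Type*} [Fintype ι] [DecidableEq ι]
    {m : EuclideanSpace ℝ ι} {S : Matrix ι ι ℝ} (hS : S.PosSemidef) :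
    ∫ x, ‖x - m‖ ^ 2 ∂(multivariateGaussian m S) = S.trace := by
  have hmean (i : ι) : ∫ x, x i ∂(multivariateGaussian m S) = m i := by
    simpa using (EuclideanSpace.proj i).integral_comp_comm
      (IsGaussian.integrable_id (μ := multivariateGaussian m S))
  have hvar (i : ι) : ∫ x, (x i - m i) ^ 2 ∂(multivariateGaussian m S) = S i i := by
    rw [← variance_eval_multivariateGaussian hS i, variance_eq_integral (by fun_prop), hmean]
  have hint (i : ι) :
      Integrable (fun x : EuclideanSpace ℝ ι => (x i - m i) ^ 2) (multivariateGaussian m S) := by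
    have h := (IsGaussian.memLp_two_id (μ := multivariateGaussian m S)).continuousLinearMap_comp
      (EuclideanSpace.proj i : EuclideanSpace ℝ ι →L[ℝ] ℝ)
    exact (h.sub (memLp_const (m i))).integrable_sq
  simp_rw [EuclideanSpace.real_norm_sq_eq, PiLp.sub_apply]
  rw [integral_finsetSum _ fun i _ => hint i]
  simp [hvar, Matrix.trace]

section StrongConvexOn

variable {E : Type*} [NormedAddCommGroup E] [InnerProductSpace ℝ E] {β : ℝ} {f : E → ℝ}

lemma StrongConvexOn.convexOn_sub_norm_sub_sq (hf : StrongConvexOn Set.univ β f) (c : E) :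
    ConvexOn ℝ Set.univ fun x => f x - β / 2 * ‖x - c‖ ^ 2 := by
  have hlin := ((β • innerₛₗ ℝ c).convexOn convex_univ).add_const (-(β / 2 * ‖c‖ ^ 2))
  refine ((strongConvexOn_iff_convex.1 hf).add hlin).congr fun x _ => ?_
  simp only [Pi.add_apply, LinearMap.smul_apply, innerₛₗ_apply_apply, smul_eq_mul]
  rw [norm_sub_sq_real, real_inner_comm]
  ring

lemma StrongConvexOn.map_integral_add_le [FiniteDimensional ℝ E] [MeasurableSpace E]
    (hf : StrongConvexOn Set.univ β f) (μ : Measure E) [IsProbabilityMeasure μ]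
    (hid : Integrable id μ) (hfi : Integrable f μ)
    (hvar : Integrable (fun x => ‖x - ∫ y, y ∂μ‖ ^ 2) μ) :
    f (∫ x, x ∂μ) + β / 2 * ∫ x, ‖x - ∫ y, y ∂μ‖ ^ 2 ∂μ ≤ ∫ x, f x ∂μ := by
  have hg := hf.convexOn_sub_norm_sub_sq (∫ y, y ∂μ)
  have jensen := hg.map_integral_le (f := id) (hg.continuousOn isOpen_univ) isClosed_univ
    (.of_forall fun _ => Set.mem_univ _) hid (hfi.sub (hvar.const_mul _))
  simp only [id, sub_self, norm_zero] at jensen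
  rw [integral_sub hfi (hvar.const_mul _), integral_const_mul] at jensen
  linarith

end StrongConvexOn

theorem jensen_gap_lower_bound_general {n : ℕ} (β : ℝ)
    (f : EuclideanSpace ℝ (Fin n) → ℝ)
    (hconv : ∀ x₁ x₂ : EuclideanSpace ℝ (Fin n), ∀ t : ℝ, t ∈ Set.Icc (0 : ℝ) 1 →
      f (t • x₁ + (1 - t) • x₂) ≤ t * f x₁ + (1 - t) * f x₂
        - β / 2 * (t * (1 - t)) * ‖x₁ - x₂‖ ^ 2)
    (m : EuclideanSpace ℝ (Fin n)) (S : Matrix (Fin n) (Fin n) ℝ) (hS : S.PosDef)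
    (hint : Integrable f (multivariateGaussian m S hS.posSemidef)) :
    β / 2 * S.trace ≤ (∫ x, f x ∂(multivariateGaussian m S hS.posSemidef)) - f m := by
  have hf : StrongConvexOn Set.univ β f := by
    refine ⟨convex_univ, fun x _ y _ a b ha hb hab => ?_⟩
    obtain rfl : b = 1 - a := by linarith
    have := hconv x y a ⟨ha, by linarith⟩
    simp only [smul_eq_mul]
    linarith
  rw [multivariateGaussian_eq_probabilityTheory_multivariateGaussian] at hint ⊢
  have hvar : Integrable (fun x => ‖x - m‖ ^ 2) (ProbabilityTheory.multivariateGaussian m S) :=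
    (IsGaussian.memLp_two_id.sub (memLp_const m)).norm.integrable_sq
  have jensen := hf.map_integral_add_le _ IsGaussian.integrable_id hint (by simpa using hvar)
  rw [integral_id_multivariateGaussian,
    integral_norm_sub_sq_multivariateGaussian hS.posSemidef] at jensen
  linarith

/-- Lower bound for the Jensen gap: if `f` is `β`-strongly convex and `x ~ N(m, S)` with `S`
positive definite, then `E[f(x)] - f(m) ≥ (β/2) · tr(S)`. -/
theorem jensen_gap_lower_bound {n : ℕ} (β : ℝ) (hβ : 0 < β)
    (f : EuclideanSpace ℝ (Fin n) → ℝ)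
    (hconv : ∀ x₁ x₂ : EuclideanSpace ℝ (Fin n), ∀ t : ℝ, t ∈ Set.Icc (0 : ℝ) 1 →
      f (t • x₁ + (1 - t) • x₂) ≤ t * f x₁ + (1 - t) * f x₂
        - β / 2 * (t * (1 - t)) * ‖x₁ - x₂‖ ^ 2)
    (m : EuclideanSpace ℝ (Fin n)) (S : Matrix (Fin n) (Fin n) ℝ) (hS : S.PosDef)
    (hint : Integrable f (multivariateGaussian m S hS.posSemidef)) :
    β / 2 * S.trace ≤ (∫ x, f x ∂(multivariateGaussian m S hS.posSemidef)) - f m :=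
  jensen_gap_lower_bound_general β f hconv m S hS hint
end

section
/- Let x be a random vector in ℝ^n whose coordinates are independent Gaussian random variables, each with mean μᵢ and variance σ² > 0 (i.e. x ~ N(μ, σ²·I) is an isotropic Gaussian). Then for every ε ≥ 0, P(‖x − μ‖² ≥ nσ² + 2nσ²(√ε + ε)) ≤ e^{−nε}. -/
/-!
Chernoff's method. Completing the square in the Gaussian density gives
`E exp(t (x - m)²) = (1 - 2tσ²)^(-1/2)` for `2tσ² < 1`, so by independence of the coordinates
`E exp(t ‖x - μ‖²) = (1 - 2tσ²)^(-n/2)`. For `r ≥ 1` the choice `1 - 2tσ² = 1/r` yields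
`P(‖x - μ‖² ≥ nσ²r) ≤ (√r · e^(-(r-1)/2))^n`. With `r = 1 + 2√ε + 2ε` the inequality
`1 + 2u + 2u² ≤ e^(2u)` gives `√r ≤ e^(√ε)`, and the bound becomes `e^(-nε)`.
-/

open MeasureTheory ProbabilityTheory Real
open scoped NNReal

/-- The isotropic Gaussian measure `N(μ, σ²·I)` on `Fin n → ℝ`: the product of `n` independent
one-dimensional Gaussians with means `μ i` and common variance `σ²`. -/
noncomputable def isoGaussian (n : ℕ) (μ : Fin n → ℝ) (σ : ℝ) : Measure (Fin n → ℝ) :=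
  Measure.pi fun i => gaussianReal (μ i) ⟨σ ^ 2, sq_nonneg σ⟩

section GaussianSquare

variable (m : ℝ) {v : ℝ≥0} {t : ℝ}

lemma gaussianPDFReal_mul_exp_mul_sq_sub (hv : v ≠ 0) (x : ℝ) :
    gaussianPDFReal m v x * exp (t * (x - m) ^ 2)
      = (√(2 * π * v))⁻¹ * exp (-((1 - 2 * t * v) / (2 * v)) * (x - m) ^ 2) := by
  have hv' : (v : ℝ) ≠ 0 := by exact_mod_cast hv
  rw [gaussianPDFReal, mul_assoc, ← exp_add]
  congr 2
  field_simp
  ring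

lemma integrable_exp_mul_sq_sub_gaussianReal (hv : v ≠ 0) (ht : 2 * t * v < 1) :
    Integrable (fun x ↦ exp (t * (x - m) ^ 2)) (gaussianReal m v) := by
  rw [gaussianReal_of_var_ne_zero _ hv, gaussianPDF_def,
    integrable_withDensity_iff_integrable_smul' (by fun_prop) (ae_of_all _ fun _ ↦ by simp)]
  simp_rw [ENNReal.toReal_ofReal (gaussianPDFReal_nonneg m v _), smul_eq_mul,
    gaussianPDFReal_mul_exp_mul_sq_sub m hv]
  exact ((integrable_exp_neg_mul_sq (by field_simp; linarith)).comp_sub_right m).const_mul _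

lemma mgf_sq_sub_gaussianReal (hv : v ≠ 0) (ht : 2 * t * v < 1) :
    mgf (fun x ↦ (x - m) ^ 2) (gaussianReal m v) t = (√(1 - 2 * t * v))⁻¹ := by
  have hv' : (0 : ℝ) < v := by positivity
  have hb : 0 < 1 - 2 * t * v := by linarith
  rw [mgf, integral_gaussianReal_eq_integral_smul hv]
  simp_rw [smul_eq_mul, gaussianPDFReal_mul_exp_mul_sq_sub m hv]
  rw [integral_const_mul,
    integral_sub_right_eq_self (fun x ↦ exp (-((1 - 2 * t * v) / (2 * v)) * x ^ 2)) m,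
    integral_gaussian, ← sqrt_inv, ← sqrt_inv, ← sqrt_mul (by positivity)]
  congr 1
  field_simp

end GaussianSquare

section PiGaussian

variable {ι : Type*} [Fintype ι] (m : ι → ℝ) {v : ℝ≥0} {t : ℝ}

lemma iIndepFun_sq_sub_pi_gaussianReal :
    iIndepFun (fun i (x : ι → ℝ) ↦ (x i - m i) ^ 2) (Measure.pi fun i ↦ gaussianReal (m i) v) :=
  iIndepFun_pi (X := fun i y ↦ (y - m i) ^ 2) fun _ ↦ by fun_prop

lemma integrable_exp_mul_sum_sq_sub_pi_gaussianReal (hv : v ≠ 0) (ht : 2 * t * v < 1) :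
    Integrable (fun x ↦ exp (t * ∑ i, (x i - m i) ^ 2))
      (Measure.pi fun i ↦ gaussianReal (m i) v) := by
  simpa using (iIndepFun_sq_sub_pi_gaussianReal m).integrable_exp_mul_sum (fun _ ↦ by fun_prop)
    (s := Finset.univ) fun i _ ↦
      integrable_comp_eval (μ := fun i ↦ gaussianReal (m i) v)
        (f := fun y ↦ exp (t * (y - m i) ^ 2)) (integrable_exp_mul_sq_sub_gaussianReal (m i) hv ht)

lemma mgf_sum_sq_sub_pi_gaussianReal (hv : v ≠ 0) (ht : 2 * t * v < 1) :
    mgf (fun x ↦ ∑ i, (x i - m i) ^ 2) (Measure.pi fun i ↦ gaussianReal (m i) v) t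
      = (√(1 - 2 * t * v))⁻¹ ^ Fintype.card ι := by
  have h := (iIndepFun_sq_sub_pi_gaussianReal m (v := v)).mgf_sum (fun _ ↦ by fun_prop) (t := t)
    Finset.univ
  simp only [Finset.sum_fn] at h
  rw [h, ← Finset.card_univ, ← Finset.prod_const]
  refine Finset.prod_congr rfl fun i _ ↦ ?_
  rw [← mgf_sq_sub_gaussianReal (m i) hv ht, mgf, mgf]
  exact integral_comp_eval (μ := fun i ↦ gaussianReal (m i) v)
    (f := fun y ↦ exp (t * (y - m i) ^ 2)) (by fun_prop)

lemma pi_gaussianReal_sum_sq_sub_tail_le (hv : v ≠ 0) {r : ℝ} (hr : 1 ≤ r) :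
    (Measure.pi fun i ↦ gaussianReal (m i) v) {x | Fintype.card ι * v * r ≤ ∑ i, (x i - m i) ^ 2}
      ≤ ENNReal.ofReal ((√r * exp (-(r - 1) / 2)) ^ Fintype.card ι) := by
  have hv' : (0 : ℝ) < v := by positivity
  have hr0 : 0 < r := by linarith
  -- the minimizer of `t ↦ exp (-t a) * (1 - 2 t v) ^ (-n/2)` at `a = n v r`
  set t : ℝ := (1 - r⁻¹) / (2 * v) with ht_def
  have ht0 : 0 ≤ t := div_nonneg (by simp [inv_le_one_of_one_le₀ hr]) (by positivity)
  have ht : 1 - 2 * t * v = r⁻¹ := by rw [ht_def]; field_simp; ring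
  have ht1 : 2 * t * v < 1 := by linarith [inv_pos.2 hr0]
  rw [← ofReal_measureReal]
  refine ENNReal.ofReal_le_ofReal <| (measure_ge_le_exp_mul_mgf _ ht0
    (integrable_exp_mul_sum_sq_sub_pi_gaussianReal m hv ht1)).trans_eq ?_
  rw [mgf_sum_sq_sub_pi_gaussianReal m hv ht1, ht, sqrt_inv, inv_inv, mul_pow, ← exp_nat_mul,
    mul_comm]
  congr 2
  rw [ht_def]
  field_simp

end PiGaussian

lemma sqrt_one_add_two_mul_add_two_mul_sq_le_exp {u : ℝ} (hu : 0 ≤ u) :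
    √(1 + 2 * u + 2 * u ^ 2) ≤ exp u := by
  have h := quadratic_le_exp_of_nonneg (mul_nonneg zero_le_two hu)
  rw [sqrt_le_left (exp_pos u).le, ← exp_nat_mul, Nat.cast_ofNat]
  linarith

/-- Laurent–Massart upper-tail bound for an isotropic Gaussian: for `x ~ N(μ, σ²·I)` and
`ε ≥ 0`, `P(‖x - μ‖² ≥ nσ² + 2nσ²(√ε + ε)) ≤ e^(-nε)`. -/
theorem isoGaussian_upper_tail {n : ℕ} (μ : Fin n → ℝ) (σ : ℝ) (hσ : 0 < σ)
    (ε : ℝ) (hε : 0 ≤ ε) :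
    isoGaussian n μ σ
        {x | n * σ ^ 2 + 2 * n * σ ^ 2 * (Real.sqrt ε + ε) ≤ ∑ i, (x i - μ i) ^ 2}
      ≤ ENNReal.ofReal (Real.exp (-(n * ε))) := by
  set u := √ε
  have hu : u ^ 2 = ε := sq_sqrt hε
  have hv : (⟨σ ^ 2, sq_nonneg σ⟩ : ℝ≥0) ≠ 0 := by
    simpa [← NNReal.coe_eq_zero] using hσ.ne'
  have htail := pi_gaussianReal_sum_sq_sub_tail_le μ hv (r := 1 + 2 * u + 2 * u ^ 2)
    (by nlinarith [sqrt_nonneg ε])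
  rw [Fintype.card_fin] at htail
  calc isoGaussian n μ σ {x | n * σ ^ 2 + 2 * n * σ ^ 2 * (u + ε) ≤ ∑ i, (x i - μ i) ^ 2}
      ≤ ENNReal.ofReal ((√(1 + 2 * u + 2 * u ^ 2) * exp (-(u + ε))) ^ n) := by
        convert htail using 5
        · rfl
        · change _ = _ * σ ^ 2 * _
          rw [← hu]; ring
        · rw [← hu]; ring
    _ ≤ ENNReal.ofReal ((exp u * exp (-(u + ε))) ^ n) := by
        gcongr
        exact sqrt_one_add_two_mul_add_two_mul_sq_le_exp (sqrt_nonneg ε)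
    _ = ENNReal.ofReal (exp (-(n * ε))) := by
        rw [← exp_add, ← exp_nat_mul]; ring_nf
end
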